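/- Let 0 ≤ b₁ < d₁ ≤ b₂ < d₂, φ(x) := exp(−x²/2), m̂₁ := ∫_{b₁}^{d₁} φ(x) dx and m̂₂ := ∫_{b₂}^{d₂} φ(x) dx. For λ ≥ max(b₁², 1), define H(λ) := ∫_0^{1 − b₁λ^{-1/2}} ∫_{b₁}^{min(d₁, √λ(1−α₁))} φ(z) ( ∫_0^{min(z + d₂, z + √λ α₁)} ( ∫_{max(b₂, y − z)}^{min(d₂, y − z + √λ(1−α₁))} φ(x) dx ) dy ) dz dα₁, where an inner integral over an interval [u, v] with v < u is taken to be 0. Then lim_{λ → ∞} H(λ) = m̂₁ ( φ(b₂) − φ(d₂) ) + m̂₂ ( φ(b₁) − φ(d₁) ). -/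

import Mathlib

/-!
Write `s = √λ`. For fixed `α ∈ (0, 1)`, as soon as `s α ≥ d₂` and `s (1 - α) ≥ d₁ + d₂` every
truncation involving `s` is inactive, and the integrand in `α` equals the limit value exactly:
this is a computation with the primitives `∫ x φ(x) dx = -φ` and `∫ Φ = t Φ + φ`, where `Φ' = φ`.
Since `φ ≤ 1` and all windows have bounded length, the integrand is bounded uniformly in `s` and
`α`, and dominated convergence on `(0, 1)` gives the limit.
-/

open MeasureTheory Real Filter

/-- `φ(x) = exp(−x²/2)`. -/
noncomputable def phi (x : ℝ) : ℝ := Real.exp (-(x ^ 2 / 2))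

/-- Integral of `f` over the interval `[u, v]`, taken to be `0` when `v < u`. -/
noncomputable def oint (u v : ℝ) (f : ℝ → ℝ) : ℝ := ∫ x in Set.Ioc u v, f x

open Set

@[fun_prop]
lemma continuous_phi : Continuous phi := by
  unfold phi; fun_prop

lemma norm_phi_le_one (x : ℝ) : ‖phi x‖ ≤ 1 := by
  rw [phi, Real.norm_of_nonneg (exp_pos _).le, exp_le_one_iff]
  nlinarith [sq_nonneg x]

lemma hasDerivAt_phi (t : ℝ) : HasDerivAt phi (-(t * phi t)) t := by
  have h : HasDerivAt (fun x : ℝ => -(x ^ 2 / 2)) (-t) t := by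
    simpa using ((hasDerivAt_pow 2 t).div_const 2).fun_neg
  exact h.exp.congr_deriv (by rw [phi]; ring)

lemma integral_mul_phi (a b : ℝ) : ∫ x in a..b, x * phi x = phi a - phi b := by
  rw [intervalIntegral.integral_eq_sub_of_hasDerivAt (f := fun x => -phi x)
    (fun x _ => (hasDerivAt_phi x).neg.congr_deriv (neg_neg _))
    (Continuous.intervalIntegrable (by fun_prop) _ _)]
  ring

noncomputable def Phi (t : ℝ) : ℝ := ∫ x in (0 : ℝ)..t, phi x

lemma hasDerivAt_Phi (t : ℝ) : HasDerivAt Phi (phi t) t :=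
  intervalIntegral.integral_hasDerivAt_right (continuous_phi.intervalIntegrable _ _)
    (continuous_phi.stronglyMeasurableAtFilter _ _) continuous_phi.continuousAt

@[fun_prop]
lemma continuous_Phi : Continuous Phi :=
  continuous_iff_continuousAt.2 fun t => (hasDerivAt_Phi t).continuousAt

lemma integral_phi (a b : ℝ) : ∫ x in a..b, phi x = Phi b - Phi a :=
  intervalIntegral.integral_eq_sub_of_hasDerivAt (fun x _ => hasDerivAt_Phi x)
    (continuous_phi.intervalIntegrable _ _)

lemma integral_Phi (a b : ℝ) :
    ∫ x in a..b, Phi x = (b * Phi b + phi b) - (a * Phi a + phi a) := by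
  refine intervalIntegral.integral_eq_sub_of_hasDerivAt (f := fun x => x * Phi x + phi x)
    (fun x _ => ?_) (continuous_Phi.intervalIntegrable _ _)
  convert ((hasDerivAt_id' x).fun_mul (hasDerivAt_Phi x)).fun_add (hasDerivAt_phi x) using 1
  ring

lemma oint_eq_intervalIntegral {u v : ℝ} (h : u ≤ v) (f : ℝ → ℝ) :
    oint u v f = ∫ x in u..v, f x := by
  rw [oint, intervalIntegral.integral_of_le h]

lemma norm_oint_le {u v C L : ℝ} {f : ℝ → ℝ} (hf : ∀ x ∈ Ioc u v, ‖f x‖ ≤ C) (hC : 0 ≤ C)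
    (hL : v - u ≤ L) (hL₀ : 0 ≤ L) : ‖oint u v f‖ ≤ C * L := by
  rw [oint]
  refine (norm_setIntegral_le_of_norm_le_const measure_Ioc_lt_top hf).trans ?_
  rw [Real.volume_real_Ioc]
  exact mul_le_mul_of_nonneg_left (max_le hL hL₀) hC

lemma measurable_oint {X : Type*} [MeasurableSpace X] {u v : X → ℝ} {f : X → ℝ → ℝ}
    (hu : Measurable u) (hv : Measurable v) (hf : Measurable (Function.uncurry f)) :
    Measurable fun x => oint (u x) (v x) (f x) := by
  have hS : MeasurableSet {p : X × ℝ | u p.1 < p.2 ∧ p.2 ≤ v p.1} :=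
    (measurableSet_lt (hu.comp measurable_fst) measurable_snd).inter
      (measurableSet_le measurable_snd (hv.comp measurable_fst))
  convert ((hf.indicator hS).stronglyMeasurable.integral_prod_right' (ν := volume)).measurable
    using 2 with x
  rw [oint, ← integral_indicator measurableSet_Ioc]
  rfl

-- The integrand of `H(λ)` in `α₁`, with `s = √λ`.
noncomputable def tripleIntegrand (b₁ d₁ b₂ d₂ s a : ℝ) : ℝ :=
  oint b₁ (min d₁ (s * (1 - a))) fun z => phi z *
    oint 0 (min (z + d₂) (z + s * a)) fun y =>
      oint (max b₂ (y - z)) (min d₂ (y - z + s * (1 - a))) phi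

lemma measurable_tripleIntegrand (b₁ d₁ b₂ d₂ s : ℝ) :
    Measurable (tripleIntegrand b₁ d₁ b₂ d₂ s) := by
  refine measurable_oint measurable_const (by fun_prop) ?_
  refine (continuous_phi.measurable.comp measurable_snd).mul ?_
  refine measurable_oint (by fun_prop) (by fun_prop) ?_
  exact measurable_oint (by fun_prop) (by fun_prop) (continuous_phi.measurable.comp measurable_snd)

lemma norm_tripleIntegrand_le {b₁ d₁ b₂ d₂ : ℝ} (h₁ : b₁ ≤ d₁) (h₂ : b₂ ≤ d₂)
    (hd : 0 ≤ d₁ + d₂) (s a : ℝ) :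
    ‖tripleIntegrand b₁ d₁ b₂ d₂ s a‖ ≤ (d₂ - b₂) * (d₁ + d₂) * (d₁ - b₁) := by
  refine norm_oint_le (fun z hz => ?_) (by nlinarith) (by linarith [min_le_left d₁ (s * (1 - a))])
    (by linarith)
  rw [norm_mul, ← one_mul ((d₂ - b₂) * (d₁ + d₂))]
  refine mul_le_mul (norm_phi_le_one z) (norm_oint_le (fun y _ => ?_) (by linarith)
    (by linarith [min_le_left (z + d₂) (z + s * a), hz.2, min_le_left d₁ (s * (1 - a))]) hd)
    (norm_nonneg _) zero_le_one
  rw [← one_mul (d₂ - b₂)]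
  exact norm_oint_le (fun x _ => norm_phi_le_one x) zero_le_one
    (by linarith [min_le_left d₂ (y - z + s * (1 - a)), le_max_left b₂ (y - z)]) (by linarith)

lemma integral_Phi_sub_Phi_max {z b d : ℝ} (hz : -z ≤ b) (hbd : b ≤ d) :
    ∫ t in -z..d, (Phi d - Phi (max b t)) = z * (Phi d - Phi b) + (phi b - phi d) := by
  have hF : Continuous fun t => Phi d - Phi (max b t) := by fun_prop
  have below : ∫ t in -z..b, (Phi d - Phi (max b t)) = ∫ _ in -z..b, (Phi d - Phi b) :=
    intervalIntegral.integral_congr fun t ht => by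
      rw [uIcc_of_le hz] at ht
      simp only [max_eq_left ht.2]
  have above : ∫ t in b..d, (Phi d - Phi (max b t)) = ∫ t in b..d, (Phi d - Phi t) :=
    intervalIntegral.integral_congr fun t ht => by
      rw [uIcc_of_le hbd] at ht
      simp only [max_eq_right ht.1]
  rw [← intervalIntegral.integral_add_adjacent_intervals (b := b) (hF.intervalIntegrable _ _)
    (hF.intervalIntegrable _ _), below, above,
    intervalIntegral.integral_sub intervalIntegrable_const (continuous_Phi.intervalIntegrable _ _),
    intervalIntegral.integral_const, intervalIntegral.integral_const, integral_Phi, smul_eq_mul,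
    smul_eq_mul]
  ring

lemma oint_oint_phi_eq_of_le {d₁ b₂ d₂ s a z : ℝ} (hz : 0 ≤ z + b₂) (hzd : z ≤ d₁)
    (h₂ : b₂ ≤ d₂) (hsa : d₂ ≤ s * a) (hsb : d₁ + d₂ ≤ s * (1 - a)) :
    oint 0 (min (z + d₂) (z + s * a))
        (fun y => oint (max b₂ (y - z)) (min d₂ (y - z + s * (1 - a))) phi)
      = z * (∫ x in b₂..d₂, phi x) + (phi b₂ - phi d₂) := by
  rw [min_eq_left (by linarith), oint,
    setIntegral_congr_fun measurableSet_Ioc (g := fun y => Phi d₂ - Phi (max b₂ (y - z))) ?_,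
    ← intervalIntegral.integral_of_le (by linarith),
    intervalIntegral.integral_comp_sub_right (fun t => Phi d₂ - Phi (max b₂ t)), zero_sub,
    add_sub_cancel_left, integral_Phi_sub_Phi_max (by linarith) h₂, integral_phi]
  intro y hy
  dsimp only
  rw [min_eq_left (by linarith [hy.1]), oint_eq_intervalIntegral (max_le h₂ (by linarith [hy.2])),
    integral_phi]

lemma tripleIntegrand_eq_of_le {b₁ d₁ b₂ d₂ s a : ℝ} (hb₁ : 0 ≤ b₁) (h₁ : b₁ ≤ d₁)
    (h₁₂ : d₁ ≤ b₂) (h₂ : b₂ ≤ d₂) (hsa : d₂ ≤ s * a) (hsb : d₁ + d₂ ≤ s * (1 - a)) :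
    tripleIntegrand b₁ d₁ b₂ d₂ s a =
      (∫ x in b₁..d₁, phi x) * (phi b₂ - phi d₂) + (∫ x in b₂..d₂, phi x) * (phi b₁ - phi d₁) := by
  rw [tripleIntegrand, min_eq_left (by linarith), oint,
    setIntegral_congr_fun measurableSet_Ioc (g := fun z =>
      (∫ x in b₂..d₂, phi x) * (z * phi z) + (phi b₂ - phi d₂) * phi z) ?_,
    ← intervalIntegral.integral_of_le h₁,
    intervalIntegral.integral_add (Continuous.intervalIntegrable (by fun_prop) _ _)
      (Continuous.intervalIntegrable (by fun_prop) _ _),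
    intervalIntegral.integral_const_mul, intervalIntegral.integral_const_mul, integral_mul_phi]
  · ring
  · intro z hz
    dsimp only
    rw [oint_oint_phi_eq_of_le (by linarith [hz.1]) hz.2 h₂ hsa hsb]
    ring

theorem tendsto_oint_tripleIntegrand {b₁ d₁ b₂ d₂ : ℝ} (hb₁ : 0 ≤ b₁) (h₁ : b₁ ≤ d₁)
    (h₁₂ : d₁ ≤ b₂) (h₂ : b₂ ≤ d₂) :
    Tendsto (fun s => oint 0 (1 - b₁ / s) (tripleIntegrand b₁ d₁ b₂ d₂ s)) atTop
      (nhds ((∫ x in b₁..d₁, phi x) * (phi b₂ - phi d₂)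
        + (∫ x in b₂..d₂, phi x) * (phi b₁ - phi d₁))) := by
  set L := (∫ x in b₁..d₁, phi x) * (phi b₂ - phi d₂) + (∫ x in b₂..d₂, phi x) * (phi b₁ - phi d₁)
  set M := (d₂ - b₂) * (d₁ + d₂) * (d₁ - b₁)
  have hsub : ∀ s ≥ (0 : ℝ), Ioo 0 (1 - b₁ / s) ⊆ Ioo 0 1 := fun s hs =>
    Ioo_subset_Ioo_right (by linarith [div_nonneg hb₁ hs])
  have hL : ∫ a, (Ioo (0 : ℝ) 1).indicator (fun _ => L) a = L := by
    simp [integral_indicator_const _ measurableSet_Ioo]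
  -- `Ioo` rather than `Ioc`, so that the pointwise limit also holds at `α = 1`
  simp_rw [oint, integral_Ioc_eq_integral_Ioo, ← integral_indicator measurableSet_Ioo]
  rw [← hL]
  refine tendsto_integral_filter_of_dominated_convergence ((Ioo 0 1).indicator fun _ => M)
    (Eventually.of_forall fun s =>
      ((measurable_tripleIntegrand ..).indicator measurableSet_Ioo).aestronglyMeasurable)
    ?_ ((integrableOn_const measure_Ioo_lt_top.ne).integrable_indicator measurableSet_Ioo)
    (ae_of_all _ fun a => ?_)
  · filter_upwards [eventually_ge_atTop 0] with s hs
    refine ae_of_all _ fun a => (norm_indicator_le_of_subset (hsub s hs) _ a).trans ?_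
    rw [norm_indicator_eq_indicator_norm]
    exact indicator_le_indicator (norm_tripleIntegrand_le h₁ h₂ (by linarith) s a)
  by_cases ha : a ∈ Ioo 0 1
  · have large_a : ∀ᶠ s in atTop, d₂ ≤ s * a :=
      (tendsto_id.atTop_mul_const ha.1).eventually_ge_atTop d₂
    have large_one_sub_a : ∀ᶠ s in atTop, d₁ + d₂ ≤ s * (1 - a) :=
      (tendsto_id.atTop_mul_const (sub_pos.2 ha.2)).eventually_ge_atTop _
    have mem : ∀ᶠ s in atTop, a < 1 - b₁ / s :=
      (tendsto_const_nhds.sub (tendsto_const_nhds.div_atTop tendsto_id)).eventually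
        (lt_mem_nhds (by simpa using ha.2))
    rw [indicator_of_mem ha]
    refine tendsto_const_nhds.congr' ?_
    filter_upwards [large_a, large_one_sub_a, mem] with s hsa hsb hs
    rw [indicator_of_mem (mem_Ioo.2 ⟨ha.1, hs⟩), tripleIntegrand_eq_of_le hb₁ h₁ h₁₂ h₂ hsa hsb]
  · rw [indicator_of_notMem ha]
    refine tendsto_const_nhds.congr' ?_
    filter_upwards [eventually_ge_atTop 0] with s hs
    rw [indicator_of_notMem fun h => ha (hsub s hs h)]

/-- asymptotics of the triple integral `H(λ)`. -/
theorem triple_integral_limit_H (b₁ d₁ b₂ d₂ : ℝ)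
    (hb₁ : 0 ≤ b₁) (h₁ : b₁ < d₁) (h₁₂ : d₁ ≤ b₂) (h₂ : b₂ < d₂) :
    Tendsto (fun lam : ℝ =>
        oint 0 (1 - b₁ / Real.sqrt lam) (fun a1 =>
          oint b₁ (min d₁ (Real.sqrt lam * (1 - a1))) (fun z => phi z *
            oint 0 (min (z + d₂) (z + Real.sqrt lam * a1)) (fun y =>
              oint (max b₂ (y - z)) (min d₂ (y - z + Real.sqrt lam * (1 - a1))) phi))))
      atTop
      (nhds ((∫ x in b₁..d₁, phi x) * (phi b₂ - phi d₂)
        + (∫ x in b₂..d₂, phi x) * (phi b₁ - phi d₁))) :=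
  (tendsto_oint_tripleIntegrand hb₁ h₁.le h₁₂ h₂.le).comp tendsto_sqrt_atTop
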